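/- arXiv:1702.03375 — 4 statements merged into one kernel-verified Lean document; each statement's English description precedes it below -/
import Mathlib

section
/- Let C be a complete d-ary tree of height l (all leaves at depth l). After the pruning process that merges all tree nodes labeled by the same ball into a single node (keeping the bottommost occurrence and redirecting edges, each redirected edge called a collision), if the resulting pruned tree has at most r collisions, then the number of leaves of the pruned tree is at least (|C| − r)/2, where |C| is the number of nodes of the pruned tree. -/
/-- Leaf count of a pruned witness tree. Model: a finite tree on vertex set `V`
where `child v` is the number of (tree-)children of `v`; the tree has
`|V| - 1` edges, every node has at most `d` children (`d ≥ 2`), and the total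
child-deficiency of internal nodes (children lost to the at most `r` collision
redirections) is at most `r`. Then the number of leaves is at least
`(|V| − r)/2`. -/
theorem stmt9 (V : Type*) [Fintype V] [DecidableEq V] (d r : ℕ) (hd : 2 ≤ d)
    (child : V → ℕ)
    (htree : ∑ v, child v = Fintype.card V - 1)
    (hle : ∀ v, child v ≤ d)
    (hcoll : ∑ v ∈ Finset.univ.filter (fun v => 1 ≤ child v), (d - child v) ≤ r) :
    Fintype.card V - r ≤ 2 * (Finset.univ.filter (fun v => child v = 0)).card := by
  classical
  set I := Finset.univ.filter (fun v => 1 ≤ child v) with hI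
  set L := Finset.univ.filter (fun v => child v = 0) with hL
  have hsplit : I.card + L.card = Fintype.card V := by
    rw [hI, hL]
    have : (Finset.univ.filter (fun v => child v = 0)) =
        (Finset.univ.filter (fun v => ¬ (1 ≤ child v))) := by
      apply Finset.filter_congr
      intro v _
      constructor <;> omega
    rw [this, Finset.card_filter_add_card_filter_not, Finset.card_univ]
  have hsum : ∑ v ∈ I, child v = Fintype.card V - 1 := by
    rw [← htree]
    apply Finset.sum_subset (Finset.subset_univ _)
    intro v _ hv
    simp only [hI, Finset.mem_filter, Finset.mem_univ, true_and] at hv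
    omega
  have hdI : d * I.card ≤ (∑ v ∈ I, child v) + ∑ v ∈ I, (d - child v) := by
    rw [← Finset.sum_add_distrib]
    have : d * I.card = ∑ _v ∈ I, d := by rw [Finset.sum_const, mul_comm]; rfl
    rw [this]
    apply Finset.sum_le_sum
    intro v _
    have := hle v
    omega
  have h2I : 2 * I.card ≤ Fintype.card V - 1 + r := by
    have : 2 * I.card ≤ d * I.card := Nat.mul_le_mul_right _ hd
    omega
  -- conclude
  rcases Nat.eq_zero_or_pos (Fintype.card V) with h0 | h0
  · omega
  · omega
end

section
/- A d-ary tree of height l pruned by at most r collision-removals contains at least 1 + d + d^2 + ... + d^{l−r} nodes; equivalently, if a complete d-ary tree of height l has each collision remove at most one full subtree per level, the pruned tree size is at least (d^{l−r+1} − 1)/(d − 1). -/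
/-!
Let `C k` be the number of collisions on the first `k` levels. By induction on `k`,
level `k` has at least `d ^ (k - C k)` nodes: a collision costs one node on the next
level, and with `d ≥ 2` losing `c` nodes from `d ^ a` costs no more than dividing by `d ^ c`.
Since `C k ≤ r`, level `i + r` has at least `d ^ i` nodes for every `i ≤ l - r`, and
summing over these levels gives the bound.
-/

open Finset

lemma Nat.pow_sub_le_pow_sub {d a c : ℕ} (hd : 2 ≤ d) (hca : c ≤ a) :
    d ^ (a - c) ≤ d ^ a - c := by
  have hc : c + 1 ≤ d ^ c :=
    (Nat.lt_two_pow_self).trans_le (Nat.pow_le_pow_left hd c)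
  have hpos : 1 ≤ d ^ (a - c) := Nat.one_le_pow _ _ (by omega)
  have : d ^ (a - c) + c ≤ d ^ a :=
    calc d ^ (a - c) + c ≤ d ^ (a - c) * (c + 1) := by nlinarith
      _ ≤ d ^ (a - c) * d ^ c := Nat.mul_le_mul_left _ hc
      _ = d ^ a := by rw [← pow_add, Nat.sub_add_cancel hca]
  omega

section PrunedTree

variable {d l : ℕ} {nodes coll : ℕ → ℕ}

lemma pow_sub_collisions_le_nodes (hd : 2 ≤ d) (hroot : nodes 0 = 1)
    (hlevel : ∀ k < l, 1 ≤ nodes (k + 1) ∧ d * nodes k - coll k ≤ nodes (k + 1)) :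
    ∀ k ≤ l, d ^ (k - ∑ j ∈ range k, coll j) ≤ nodes k := by
  intro k
  induction k with
  | zero => simp [hroot]
  | succ k ih =>
    intro hk
    obtain ⟨hnonempty, hgrowth⟩ := hlevel k (by omega)
    have ih := ih (by omega)
    rw [sum_range_succ]
    set C := ∑ j ∈ range k, coll j
    by_cases hsat : k + 1 ≤ C + coll k
    · rw [Nat.sub_eq_zero_of_le hsat, pow_zero]
      exact hnonempty
    · have hprev : d ^ (k + 1 - C) ≤ d * nodes k := by
        rw [show k + 1 - C = k - C + 1 by omega, pow_succ']
        exact Nat.mul_le_mul_left d ih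
      calc d ^ (k + 1 - (C + coll k)) = d ^ (k + 1 - C - coll k) := by rw [Nat.sub_add_eq]
        _ ≤ d ^ (k + 1 - C) - coll k := Nat.pow_sub_le_pow_sub hd (by omega)
        _ ≤ d * nodes k - coll k := Nat.sub_le_sub_right hprev _
        _ ≤ nodes (k + 1) := hgrowth

end PrunedTree

/-- Size of a `d`-ary witness tree of height `l` pruned by at most `r`
collision-removals. Model: `nodes k` is the number of nodes at depth `k`
(`nodes 0 = 1` is the root); each of the `nodes k` nodes at depth `k < l` has
`d` out-edges, of which `coll k` are collision edges (pointing to existing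
nodes), so `nodes (k+1) ≥ d·(nodes k) − coll k` and `nodes (k+1) ≥ 1`; the
total number of collisions is at most `r`. Then the pruned tree has at least
`1 + d + d² + ⋯ + d^{l−r} = (d^{l−r+1} − 1)/(d − 1)` nodes. -/
theorem stmt11 (d l r : ℕ) (hd : 2 ≤ d) (nodes coll : ℕ → ℕ)
    (hroot : nodes 0 = 1)
    (hlevel : ∀ k < l, 1 ≤ nodes (k + 1) ∧ d * nodes k - coll k ≤ nodes (k + 1))
    (hcoll : ∑ k ∈ Finset.range l, coll k ≤ r) :
    ∑ i ∈ Finset.range (l - r + 1), d ^ i ≤ ∑ k ∈ Finset.range (l + 1), nodes k := by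
  have hlevels := pow_sub_collisions_le_nodes hd hroot hlevel
  -- shifting by `min r l` rather than `r` also covers the degenerate case `l < r`
  set s := min r l
  have hshift : ∀ i ∈ range (l - r + 1), d ^ i ≤ nodes (s + i) := by
    intro i hi
    have hi : i ≤ l - r := Nat.lt_succ_iff.mp (mem_range.mp hi)
    have hC : ∑ j ∈ range (s + i), coll j ≤ r :=
      (sum_le_sum_of_subset (range_subset_range.mpr (by omega))).trans hcoll
    exact (Nat.pow_le_pow_right (by omega) (by omega)).trans (hlevels (s + i) (by omega))
  calc ∑ i ∈ range (l - r + 1), d ^ i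
      ≤ ∑ i ∈ range (l - r + 1), nodes (s + i) := sum_le_sum hshift
    _ ≤ ∑ k ∈ range (s + (l - r + 1)), nodes k := by
        rw [sum_range_add nodes s (l - r + 1)]
        exact Nat.le_add_left _ _
    _ ≤ ∑ k ∈ range (l + 1), nodes k :=
        sum_le_sum_of_subset (range_subset_range.mpr (by omega))
end

section
/- Define f(l, i) for l ≥ 0 and 1 ≤ i ≤ d by f(0, i) = 1 and f(l, i) = ∑_{j=1}^{i−1} f(l, j) + ∑_{j=i}^{d} f(l−1, j) for l ≥ 1. Then setting g((l−1)·d + i) = f(l, i), the function g satisfies g(n) = g(n−1) + g(n−2) + ... + g(n−d) for all sufficiently large n. -/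
/-- The sizes `f(l,i)` of full asymmetric witness trees in the Always-Go-Left
scheme (`f(0,i) = 1`, `f(l,i) = ∑_{j<i} f(l,j) + ∑_{j≥i} f(l−1,j)`) satisfy,
via `g((l−1)·d + i) = f(l,i)`, the `d`-bonacci recurrence
`g(n) = g(n−1) + ⋯ + g(n−d)` for all sufficiently large `n`. -/
theorem stmt12 (d : ℕ) (hd : 2 ≤ d) (f : ℕ → ℕ → ℝ) (g : ℕ → ℝ)
    (hf0 : ∀ i ∈ Finset.Icc 1 d, f 0 i = 1)
    (hfrec : ∀ l, 1 ≤ l → ∀ i ∈ Finset.Icc 1 d,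
      f l i = ∑ j ∈ Finset.Icc 1 (i - 1), f l j + ∑ j ∈ Finset.Icc i d, f (l - 1) j)
    (hg : ∀ l, 1 ≤ l → ∀ i ∈ Finset.Icc 1 d, g ((l - 1) * d + i) = f l i) :
    ∀ n, d + 1 ≤ n → g n = ∑ j ∈ Finset.Icc 1 d, g (n - j) := by
  intro n hn
  have hd0 : 0 < d := by omega
  obtain ⟨l, i, hl2, hi1, hid, hne⟩ :
      ∃ l i, 2 ≤ l ∧ 1 ≤ i ∧ i ≤ d ∧ (l - 1) * d + i = n := by
    refine ⟨(n - 1) / d + 1, (n - 1) % d + 1, ?_, ?_, ?_, ?_⟩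
    · have h1 : d ≤ n - 1 := by omega
      have := (Nat.one_le_div_iff hd0).mpr h1
      omega
    · omega
    · have := Nat.mod_lt (n - 1) hd0
      omega
    · simp only [Nat.add_sub_cancel]
      rw [← add_assoc, Nat.div_add_mod']
      omega
  have hmem : i ∈ Finset.Icc 1 d := Finset.mem_Icc.mpr ⟨hi1, hid⟩
  have hm' : (l - 2) * d + d = (l - 1) * d := by
    have h : l - 2 + 1 = l - 1 := by omega
    calc (l - 2) * d + d = (l - 2 + 1) * d := by ring
    _ = (l - 1) * d := by rw [h]
  have key1 : ∀ j, 1 ≤ j → j < i → n - (i - j) = (l - 1) * d + j := by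
    intro j h1 h2
    generalize hA : (l - 1) * d = A at hne ⊢
    omega
  have key2 : ∀ j, i ≤ j → j ≤ d → n - (d + i - j) = (l - 2) * d + j := by
    intro j h1 h2
    generalize hA : (l - 1) * d = A at hne hm'
    generalize hB : (l - 2) * d = B at hm' ⊢
    omega
  have hgn : g n = f l i := by
    have := hg l (by omega) i hmem
    rw [hne] at this; exact this
  rw [hgn, hfrec l (by omega) i hmem]
  have e1 : ∑ j ∈ Finset.Icc 1 (i - 1), f l j = ∑ j ∈ Finset.Ico 1 i, g (n - j) := by
    rw [show Finset.Icc 1 (i - 1) = Finset.Ico 1 i by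
      rw [← Finset.Ico_add_one_right_eq_Icc]; congr 1; omega]
    refine Finset.sum_nbij' (fun j => i - j) (fun j => i - j) ?_ ?_ ?_ ?_ ?_
    · intro a ha; simp only [Finset.mem_Ico] at *; omega
    · intro a ha; simp only [Finset.mem_Ico] at *; omega
    · intro a ha; simp only [Finset.mem_Ico] at ha; omega
    · intro a ha; simp only [Finset.mem_Ico] at ha; omega
    · intro j hj
      simp only [Finset.mem_Ico] at hj
      rw [key1 j hj.1 hj.2]
      exact (hg l (by omega) j (Finset.mem_Icc.mpr ⟨hj.1, by omega⟩)).symm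
  have e2 : ∑ j ∈ Finset.Icc i d, f (l - 1) j = ∑ j ∈ Finset.Ico i (d + 1), g (n - j) := by
    rw [Finset.Ico_add_one_right_eq_Icc]
    refine Finset.sum_nbij' (fun j => d + i - j) (fun j => d + i - j) ?_ ?_ ?_ ?_ ?_
    · intro a ha; simp only [Finset.mem_Icc] at *; omega
    · intro a ha; simp only [Finset.mem_Icc] at *; omega
    · intro a ha; simp only [Finset.mem_Icc] at ha; omega
    · intro a ha; simp only [Finset.mem_Icc] at ha; omega
    · intro j hj
      simp only [Finset.mem_Icc] at hj
      rw [key2 j hj.1 hj.2]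
      have := hg (l - 1) (by omega) j (Finset.mem_Icc.mpr ⟨by omega, hj.2⟩)
      have hsub : l - 1 - 1 = l - 2 := by omega
      rw [hsub] at this
      exact this.symm
  rw [e1, e2, Finset.sum_Ico_consecutive _ (by omega : 1 ≤ i) (by omega : i ≤ d + 1),
    Finset.Ico_add_one_right_eq_Icc]
end

section
/- With f(l, i) as the asymmetric witness tree size (f(0,i)=1, f(l,i) = ∑_{j<i} f(l,j) + ∑_{j≥i} f(l−1,j)), there exist constants c_0, c_1 > 0 such that c_0 · φ_d^{(l−1)d + i} ≤ f(l, i) ≤ c_1 · φ_d^{(l−1)d + i} for all l ≥ 1 and 1 ≤ i ≤ d, where φ_d ∈ (1,2) is the unique root > 1 of x^d = 1 + x + ... + x^{d−1}. -/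
/-!
Read row by row, the table `f` becomes one sequence `g (l * d + (i - 1)) = f l i`
(`witnessSeq`) in which every term is the sum of the `d` preceding ones, and so is `c * φ ^ n`
for every `c` because `φ` is a root of `x ^ d = 1 + x + ⋯ + x ^ (d - 1)`. This recurrence is
monotone in its initial block of `d` values, and `g` equals `1` there, so `g` is squeezed
between `φ ^ n / φ ^ (d - 1)` and `φ ^ n`.
-/

open Finset

def IsBonacci {M : Type*} [AddCommMonoid M] (d : ℕ) (u : ℕ → M) : Prop :=
  ∀ n, u (n + d) = ∑ k ∈ range d, u (n + k)

namespace IsBonacci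

variable {M : Type*} [AddCommMonoid M] [PartialOrder M] [IsOrderedAddMonoid M]
  {d : ℕ} {u v : ℕ → M}

theorem le_of_forall_lt_le (hu : IsBonacci d u) (hv : IsBonacci d v)
    (h : ∀ n < d, u n ≤ v n) (n : ℕ) : u n ≤ v n := by
  induction n using Nat.strong_induction_on with
  | _ n ih =>
    rcases lt_or_ge n d with hn | hn
    · exact h n hn
    · obtain ⟨m, rfl⟩ := Nat.exists_eq_add_of_le' hn
      rw [hu, hv]
      exact sum_le_sum fun k hk => ih _ (by rw [mem_range] at hk; omega)

end IsBonacci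

theorem isBonacci_mul_pow {R : Type*} [CommSemiring R] {d : ℕ} {φ : R}
    (hφ : φ ^ d = ∑ k ∈ range d, φ ^ k) (c : R) : IsBonacci d (fun n => c * φ ^ n) := by
  intro n
  simp only [pow_add, hφ, mul_sum]

def witnessSeq {M : Type*} (d : ℕ) (f : ℕ → ℕ → M) (n : ℕ) : M := f (n / d) (n % d + 1)

theorem witnessSeq_mul_add {M : Type*} {d s : ℕ} (f : ℕ → ℕ → M) (l : ℕ) (hs : s < d) :
    witnessSeq d f (d * l + s) = f l (s + 1) := by
  have hd : 0 < d := by omega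
  simp [witnessSeq, Nat.mul_add_div hd, Nat.div_eq_of_lt hs, Nat.mod_eq_of_lt hs]

theorem sum_Icc_eq_sum_range {M : Type*} [AddCommMonoid M] (F : ℕ → M) (a b : ℕ) :
    ∑ j ∈ Icc a b, F j = ∑ k ∈ range (b + 1 - a), F (a + k) := by
  rw [← Ico_add_one_right_eq_Icc, sum_Ico_eq_sum_range]

theorem isBonacci_witnessSeq {M : Type*} [AddCommMonoid M] {d : ℕ} (hd : 0 < d) {f : ℕ → ℕ → M}
    (hfrec : ∀ l, 1 ≤ l → ∀ i ∈ Icc 1 d,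
      f l i = ∑ j ∈ Icc 1 (i - 1), f l j + ∑ j ∈ Icc i d, f (l - 1) j) :
    IsBonacci d (witnessSeq d f) := by
  intro n
  obtain ⟨l, r, hr, rfl⟩ : ∃ l r, r < d ∧ n = d * l + r :=
    ⟨n / d, n % d, Nat.mod_lt n hd, (Nat.div_add_mod n d).symm⟩
  have hsplit : d = (d - r) + r := by omega
  rw [show d * l + r + d = d * (l + 1) + r by ring, witnessSeq_mul_add f _ hr,
    hfrec (l + 1) (by omega) (r + 1) (mem_Icc.2 ⟨by omega, by omega⟩),
    Nat.add_sub_cancel, Nat.add_sub_cancel, add_comm, sum_Icc_eq_sum_range, sum_Icc_eq_sum_range,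
    hsplit, sum_range_add, ← hsplit]
  congr 1
  · refine sum_congr (by congr 1; omega) fun k hk => ?_
    rw [mem_range] at hk
    rw [add_assoc (d * l), witnessSeq_mul_add f l (by omega), add_right_comm]
  · refine sum_congr rfl fun k hk => ?_
    rw [mem_range] at hk
    rw [show d * l + r + (d - r + k) = d * (l + 1) + k by rw [mul_add]; omega,
      witnessSeq_mul_add f _ (by omega), add_comm 1 k]

theorem stmt13_general (d : ℕ) (hd : 2 ≤ d) (f : ℕ → ℕ → ℝ) (φ : ℝ)
    (hφ1 : 1 < φ)
    (hφ : φ ^ d = ∑ i ∈ Finset.range d, φ ^ i)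
    (hf0 : ∀ i ∈ Finset.Icc 1 d, f 0 i = 1)
    (hfrec : ∀ l, 1 ≤ l → ∀ i ∈ Finset.Icc 1 d,
      f l i = ∑ j ∈ Finset.Icc 1 (i - 1), f l j + ∑ j ∈ Finset.Icc i d, f (l - 1) j) :
    ∃ c₀ c₁ : ℝ, 0 < c₀ ∧ 0 < c₁ ∧
      ∀ l, 1 ≤ l → ∀ i ∈ Finset.Icc 1 d,
        c₀ * φ ^ ((l - 1) * d + i) ≤ f l i ∧ f l i ≤ c₁ * φ ^ ((l - 1) * d + i) := by
  have hg := isBonacci_witnessSeq (by omega) hfrec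
  have hbase : ∀ n < d, witnessSeq d f n = 1 := fun n hn => by
    rw [← zero_add n, ← mul_zero d, witnessSeq_mul_add f 0 hn]
    exact hf0 (n + 1) (mem_Icc.2 ⟨by omega, by omega⟩)
  have lower : ∀ n, (φ ^ (d - 1))⁻¹ * φ ^ n ≤ witnessSeq d f n :=
    (isBonacci_mul_pow hφ _).le_of_forall_lt_le hg fun n hn => by
      rw [hbase n hn, inv_mul_le_one₀ (by positivity)]
      exact pow_le_pow_right₀ hφ1.le (by omega)
  have upper : ∀ n, witnessSeq d f n ≤ 1 * φ ^ n :=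
    hg.le_of_forall_lt_le (isBonacci_mul_pow hφ 1) fun n hn => by
      rw [hbase n hn, one_mul]
      exact one_le_pow₀ hφ1.le
  refine ⟨1, φ ^ (d - 1), one_pos, by positivity, fun l hl i hi => ?_⟩
  obtain ⟨hi1, hid⟩ := mem_Icc.1 hi
  obtain ⟨l, rfl⟩ := Nat.exists_eq_add_of_le' hl
  have hfl : f (l + 1) i = witnessSeq d f (l * d + i + (d - 1)) := by
    rw [show l * d + i + (d - 1) = d * (l + 1) + (i - 1) by
        rw [mul_add, mul_one, mul_comm d]; omega,
      witnessSeq_mul_add f _ (by omega), Nat.sub_add_cancel hi1]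
  have hpos : 0 < φ ^ (d - 1) := by positivity
  rw [Nat.add_sub_cancel, hfl]
  constructor
  · simpa only [one_mul, mul_one, pow_add φ _ (d - 1), mul_comm, mul_inv_cancel_right₀ hpos.ne']
      using lower (l * d + i + (d - 1))
  · simpa only [one_mul, mul_one, pow_add φ _ (d - 1), mul_comm] using upper (l * d + i + (d - 1))

/-- The asymmetric witness tree sizes `f(l,i)` (`f(0,i) = 1`,
`f(l,i) = ∑_{j<i} f(l,j) + ∑_{j≥i} f(l−1,j)`) satisfy
`c₀ · φ_d^{(l−1)d+i} ≤ f(l,i) ≤ c₁ · φ_d^{(l−1)d+i}`, where `φ_d ∈ (1,2)` is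
the unique root `> 1` of `x^d = 1 + x + ⋯ + x^{d−1}`. -/
theorem stmt13 (d : ℕ) (hd : 2 ≤ d) (f : ℕ → ℕ → ℝ) (φ : ℝ)
    (hφ1 : 1 < φ) (hφ2 : φ < 2)
    (hφ : φ ^ d = ∑ i ∈ Finset.range d, φ ^ i)
    (hf0 : ∀ i ∈ Finset.Icc 1 d, f 0 i = 1)
    (hfrec : ∀ l, 1 ≤ l → ∀ i ∈ Finset.Icc 1 d,
      f l i = ∑ j ∈ Finset.Icc 1 (i - 1), f l j + ∑ j ∈ Finset.Icc i d, f (l - 1) j) :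
    ∃ c₀ c₁ : ℝ, 0 < c₀ ∧ 0 < c₁ ∧
      ∀ l, 1 ≤ l → ∀ i ∈ Finset.Icc 1 d,
        c₀ * φ ^ ((l - 1) * d + i) ≤ f l i ∧ f l i ≤ c₁ * φ ^ ((l - 1) * d + i) :=
  stmt13_general d hd f φ hφ1 hφ hf0 hfrec
end
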